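/- Let G be a group, B a G-invariant Boolean algebra of subsets of G satisfying the definability-of-types condition, S its Stone space, and K the kernel of the action of G on a minimal closed G-invariant subset M of S (the set of g fixing every point of M). Then K contains the intersection of all sets Y Y⁻¹ over left generic Y ∈ B. -/

import Mathlib

/-- The left translate `gY` of a subset of a group. -/
def LTrans {G : Type*} [Group G] (g : G) (Y : Set G) : Set G := (g * ·) '' Y

/-- `B` is a Boolean algebra of subsets of `G` closed under left translations. -/
def IsInvBoolAlg {G : Type*} [Group G] (B : Set (Set G)) : Prop :=
  Set.univ ∈ B ∧ (∀ Y ∈ B, Yᶜ ∈ B) ∧ (∀ Y ∈ B, ∀ Z ∈ B, Y ∩ Z ∈ B) ∧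
    ∀ (g : G), ∀ Y ∈ B, LTrans g Y ∈ B

/-- `p` is an ultrafilter on the Boolean algebra `B` of subsets. -/
def IsUltraOn {α : Type*} (B p : Set (Set α)) : Prop :=
  p ⊆ B ∧ Set.univ ∈ p ∧ ∅ ∉ p ∧ (∀ Y ∈ p, ∀ Z ∈ p, Y ∩ Z ∈ p) ∧
    (∀ Y ∈ p, ∀ Z ∈ B, Y ⊆ Z → Z ∈ p) ∧ ∀ Y ∈ B, Y ∈ p ∨ Yᶜ ∈ p

/-- `Y` is left generic: finitely many left translates of `Y` cover `G`. -/
def IsLeftGeneric {G : Type*} [Group G] (Y : Set G) : Prop :=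
  ∃ F : Finset G, ⋃ g ∈ F, LTrans g Y = Set.univ

/-- The set `Y · Y⁻¹ = {a b⁻¹ : a, b ∈ Y}`. -/
def MulInvSet {G : Type*} [Group G] (Y : Set G) : Set G :=
  {x | ∃ a ∈ Y, ∃ b ∈ Y, x = a * b⁻¹}

/-- The Stone space of the Boolean algebra `B`: the set of ultrafilters on `B`. -/
abbrev StoneS {α : Type*} (B : Set (Set α)) : Type _ := {p : Set (Set α) // IsUltraOn B p}

/-- The Stone topology, generated by the basic (cl)open sets `{p : Y ∈ p}`, `Y ∈ B`. -/
instance stoneTop {α : Type*} (B : Set (Set α)) : TopologicalSpace (StoneS B) :=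
  TopologicalSpace.generateFrom {U | ∃ Y ∈ B, U = {p : StoneS B | Y ∈ p.1}}

/-- The translation action of `G` on ultrafilters: `Y ∈ g·p ↔ g⁻¹Y ∈ p`. -/
def actUF {G : Type*} [Group G] (g : G) (p : Set (Set G)) : Set (Set G) :=
  {Y | LTrans g⁻¹ Y ∈ p}

/-- `M` is a `G`-subflow of the Stone space: nonempty, closed and `G`-invariant. -/
def IsSubflow {G : Type*} [Group G] (B : Set (Set G)) (M : Set (StoneS B)) : Prop :=
  M.Nonempty ∧ IsClosed M ∧ ∀ (g : G), ∀ q ∈ M, ∃ q' ∈ M, q'.1 = actUF g q.1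

/-- `M` is a minimal `G`-subflow of the Stone space. -/
def IsMinSubflow {G : Type*} [Group G] (B : Set (Set G)) (M : Set (StoneS B)) : Prop :=
  IsSubflow B M ∧ ∀ M' ⊆ M, IsSubflow B M' → M' = M

/-!
Fix `p ∈ M`. For `Z ∈ p` the return set `{h | Z ∈ h·p}` lies in `B` by definability of types, and
it is left generic because every orbit in the minimal flow `M` is dense and `M` is compact. If
`g·p ≠ p`, there is `Y ∈ g·p` with `Yᶜ ∈ p`, so `Z = Yᶜ ∩ g⁻¹Y ∈ p`. Writing `g = a b⁻¹` with `a, b`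
in the return set of `Z`, the sets `a⁻¹Z, b⁻¹Z ∈ p` share a point `x`, and then
`a x = g (b x) ∈ Y` contradicts `a x ∈ Yᶜ`.
-/

open Pointwise

namespace IsUltraOn

variable {α : Type*} {B p q : Set (Set α)}

lemma nonempty_of_mem (hp : IsUltraOn B p) {Y : Set α} (hY : Y ∈ p) : Y.Nonempty :=
  Set.nonempty_iff_ne_empty.2 fun h => hp.2.2.1 (h ▸ hY)

lemma compl_mem_of_notMem (hp : IsUltraOn B p) {Y : Set α} (hYB : Y ∈ B) (hY : Y ∉ p) :
    Yᶜ ∈ p :=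
  (hp.2.2.2.2.2 Y hYB).resolve_left hY

lemma eq_of_subset (hp : IsUltraOn B p) (hq : IsUltraOn B q) (hpq : p ⊆ q) : p = q := by
  refine hpq.antisymm fun Y hY => ?_
  by_contra hYp
  have hYc : Yᶜ ∈ q := hpq (hp.compl_mem_of_notMem (hq.1 hY) hYp)
  exact hq.2.2.1 (Set.inter_compl_self Y ▸ hq.2.2.2.1 _ hY _ hYc)

end IsUltraOn

/-- An ultrafilter `f` on the Stone space converges to the point `{Y | {r | Y ∈ r} ∈ f}`. -/
instance compactSpace_stoneS {α : Type*} (B : Set (Set α)) : CompactSpace (StoneS B) := by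
  refine ⟨isCompact_iff_ultrafilter_le_nhds.2 fun f _ => ?_⟩
  let q : Set (Set α) := {Y | {r : StoneS B | Y ∈ r.1} ∈ f}
  have hq : IsUltraOn B q := by
    refine ⟨fun Y hY => ?_, ?_, ?_, ?_, ?_, ?_⟩
    · obtain ⟨r, hr⟩ := f.nonempty_of_mem hY
      exact r.2.1 hr
    · exact Filter.mem_of_superset Filter.univ_mem fun r _ => r.2.2.1
    · exact fun h => Filter.empty_notMem (f : Filter (StoneS B))
        (Filter.mem_of_superset h fun r hr => r.2.2.2.1 hr)
    · exact fun Y hY Z hZ =>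
        Filter.mem_of_superset (Filter.inter_mem hY hZ) fun r hr => r.2.2.2.2.1 _ hr.1 _ hr.2
    · exact fun Y hY Z hZB hYZ =>
        Filter.mem_of_superset hY fun r hr => r.2.2.2.2.2.1 _ hr _ hZB hYZ
    · intro Y hYB
      refine (f.mem_or_compl_mem {r : StoneS B | Y ∈ r.1}).imp id fun h => ?_
      exact Filter.mem_of_superset h fun r hr => r.2.compl_mem_of_notMem hYB hr
  refine ⟨⟨q, hq⟩, trivial, ?_⟩
  rw [TopologicalSpace.nhds_generateFrom]
  refine le_iInf₂ fun U hU => ?_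
  obtain ⟨hqU, Y, -, rfl⟩ := hU
  exact Filter.le_principal_iff.2 hqU

lemma isOpen_setOf_mem {α : Type*} {B : Set (Set α)} {Y : Set α} (hY : Y ∈ B) :
    IsOpen {p : StoneS B | Y ∈ p.1} :=
  TopologicalSpace.GenerateOpen.basic _ ⟨Y, hY, rfl⟩

section Action

variable {G : Type*} [Group G] {B : Set (Set G)}

@[simp]
lemma LTrans_eq_smul (g : G) (Y : Set G) : LTrans g Y = g • Y := rfl

@[simp]
lemma mem_actUF {g : G} {p : Set (Set G)} {Y : Set G} : Y ∈ actUF g p ↔ g⁻¹ • Y ∈ p :=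
  Iff.rfl

lemma IsInvBoolAlg.smul_mem (hB : IsInvBoolAlg B) (g : G) {Y : Set G} (hY : Y ∈ B) :
    g • Y ∈ B :=
  hB.2.2.2 g Y hY

lemma IsUltraOn.act (hB : IsInvBoolAlg B) {p : Set (Set G)} (hp : IsUltraOn B p) (g : G) :
    IsUltraOn B (actUF g p) := by
  obtain ⟨hpB, huniv, hempty, hinter, hup, hcompl⟩ := hp
  refine ⟨fun Y hY => ?_, ?_, ?_, ?_, ?_, ?_⟩
  · simpa [smul_smul] using hB.smul_mem g (hpB (mem_actUF.1 hY))
  · simpa [Set.smul_set_univ] using huniv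
  · simpa [Set.smul_set_empty] using hempty
  · intro Y hY Z hZ
    simpa [Set.smul_set_inter] using hinter _ hY _ hZ
  · exact fun Y hY Z hZB hYZ =>
      hup (g⁻¹ • Y) hY (g⁻¹ • Z) (hB.smul_mem _ hZB) (Set.smul_set_mono hYZ)
  · intro Y hYB
    simpa [Set.smul_set_compl] using hcompl _ (hB.smul_mem g⁻¹ hYB)

def stoneAct (hB : IsInvBoolAlg B) (g : G) (q : StoneS B) : StoneS B :=
  ⟨actUF g q.1, q.2.act hB g⟩

lemma stoneAct_one (hB : IsInvBoolAlg B) (q : StoneS B) : stoneAct hB 1 q = q :=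
  Subtype.ext <| Set.ext fun Y => by simp [stoneAct]

lemma stoneAct_stoneAct (hB : IsInvBoolAlg B) (g h : G) (q : StoneS B) :
    stoneAct hB g (stoneAct hB h q) = stoneAct hB (g * h) q :=
  Subtype.ext <| Set.ext fun Y => by simp [stoneAct, smul_smul]

lemma continuous_stoneAct (hB : IsInvBoolAlg B) (g : G) : Continuous (stoneAct hB g) :=
  continuous_generateFrom_iff.2 fun _ ⟨_, hY, hU⟩ =>
    hU ▸ isOpen_setOf_mem (hB.smul_mem g⁻¹ hY)

lemma IsSubflow.stoneAct_mem (hB : IsInvBoolAlg B) {M : Set (StoneS B)} (hM : IsSubflow B M)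
    (g : G) {q : StoneS B} (hq : q ∈ M) : stoneAct hB g q ∈ M := by
  obtain ⟨q', hq'M, hq'⟩ := hM.2.2 g q hq
  exact (Subtype.ext hq' : q' = stoneAct hB g q) ▸ hq'M

lemma isSubflow_closure_orbit (hB : IsInvBoolAlg B) (q : StoneS B) :
    IsSubflow B (closure (Set.range fun h : G => stoneAct hB h q)) := by
  refine ⟨⟨q, subset_closure ⟨1, stoneAct_one hB q⟩⟩, isClosed_closure, fun g r hr => ?_⟩
  refine ⟨stoneAct hB g r, ?_, rfl⟩
  have horbit : Set.MapsTo (stoneAct hB g) (Set.range fun h : G => stoneAct hB h q)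
      (Set.range fun h : G => stoneAct hB h q) := by
    rintro _ ⟨h, rfl⟩
    exact ⟨g * h, (stoneAct_stoneAct hB g h q).symm⟩
  exact horbit.closure (continuous_stoneAct hB g) hr

lemma IsMinSubflow.closure_orbit_eq (hB : IsInvBoolAlg B) {M : Set (StoneS B)}
    (hM : IsMinSubflow B M) {q : StoneS B} (hq : q ∈ M) :
    closure (Set.range fun h : G => stoneAct hB h q) = M :=
  hM.2 _ (closure_minimal (Set.range_subset_iff.2 fun h => hM.1.stoneAct_mem hB h hq)
    hM.1.2.1) (isSubflow_closure_orbit hB q)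

lemma IsMinSubflow.exists_mem_actUF (hB : IsInvBoolAlg B) {M : Set (StoneS B)}
    (hM : IsMinSubflow B M) {p q : StoneS B} (hp : p ∈ M) (hq : q ∈ M)
    {Z : Set G} (hZB : Z ∈ B) (hZp : Z ∈ p.1) : ∃ h : G, Z ∈ actUF h q.1 := by
  have hp' : p ∈ closure (Set.range fun h : G => stoneAct hB h q) :=
    (hM.closure_orbit_eq hB hq).symm ▸ hp
  obtain ⟨_, hZ, h, rfl⟩ := mem_closure_iff.1 hp' _ (isOpen_setOf_mem hZB) hZp
  exact ⟨h, hZ⟩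

/-- Finitely many of the open sets `{r | Z ∈ h·r}` cover the compact set `M`; evaluating this
cover at the translates `x·p` gives finitely many left translates of the return set covering `G`. -/
lemma IsMinSubflow.isLeftGeneric (hB : IsInvBoolAlg B) {M : Set (StoneS B)}
    (hM : IsMinSubflow B M) {p : StoneS B} (hp : p ∈ M) {Z : Set G} (hZB : Z ∈ B)
    (hZp : Z ∈ p.1) : IsLeftGeneric {h : G | Z ∈ actUF h p.1} := by
  classical
  have hcover : M ⊆ ⋃ h : G, {r : StoneS B | Z ∈ actUF h r.1} := fun q hq =>
    Set.mem_iUnion.2 (hM.exists_mem_actUF hB hp hq hZB hZp)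
  obtain ⟨t, ht⟩ := hM.1.2.1.isCompact.elim_finite_subcover _
    (fun h : G => isOpen_setOf_mem (hB.smul_mem h⁻¹ hZB)) hcover
  refine ⟨t.image (·⁻¹), Set.eq_univ_of_forall fun x => ?_⟩
  obtain ⟨h, hht, hZ⟩ := Set.mem_iUnion₂.1 (ht (hM.1.stoneAct_mem hB x hp))
  refine Set.mem_iUnion₂.2 ⟨h⁻¹, Finset.mem_image_of_mem _ hht, ?_⟩
  simpa [Set.mem_smul_set_iff_inv_smul_mem, stoneAct, smul_smul] using hZ

lemma IsUltraOn.actUF_subset (hB : IsInvBoolAlg B) {p : Set (Set G)} (hp : IsUltraOn B p)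
    {g : G} (hg : ∀ Z ∈ p, g ∈ MulInvSet {h : G | Z ∈ actUF h p}) : actUF g p ⊆ p := by
  intro Y hYg
  have hYB : Y ∈ B := (hp.act hB g).1 hYg
  by_contra hYp
  have hZp : Yᶜ ∩ g⁻¹ • Y ∈ p := hp.2.2.2.1 _ (hp.compl_mem_of_notMem hYB hYp) _ hYg
  obtain ⟨a, ha, b, hb, rfl⟩ := hg _ hZp
  obtain ⟨x, hxa, hxb⟩ := hp.nonempty_of_mem (hp.2.2.2.1 _ ha _ hb)
  simp only [LTrans_eq_smul, Set.mem_smul_set_iff_inv_smul_mem, inv_inv, smul_eq_mul,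
    Set.mem_inter_iff, Set.mem_compl_iff] at hxa hxb
  exact hxa.1 (by simpa [mul_assoc] using hxb.2)

end Action

/-- The kernel of the action of `G` on a minimal subflow `M` of the Stone space of `B`
contains the intersection of the sets `Y Y⁻¹` over all left generic `Y ∈ B`. -/
theorem stmt_18 {G : Type*} [Group G] (B : Set (Set G)) (hB : IsInvBoolAlg B)
    (hdef : ∀ p : StoneS B, ∀ Y ∈ B, {h : G | Y ∈ actUF h p.1} ∈ B)
    (M : Set (StoneS B)) (hM : IsMinSubflow B M) :
    (⋂ Y ∈ {Y : Set G | Y ∈ B ∧ IsLeftGeneric Y}, MulInvSet Y) ⊆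
      {g : G | ∀ p ∈ M, actUF g p.1 = p.1} := by
  intro g hg p hp
  have hgp : ∀ Z ∈ p.1, g ∈ MulInvSet {h : G | Z ∈ actUF h p.1} := fun Z hZp =>
    Set.mem_iInter₂.1 hg _ ⟨hdef p Z (p.2.1 hZp), hM.isLeftGeneric hB hp (p.2.1 hZp) hZp⟩
  exact (p.2.act hB g).eq_of_subset p.2 (p.2.actUF_subset hB hgp)
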